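/- arXiv:2005.10783 — 2 statements merged into one kernel-verified Lean document; each statement's English description precedes it below -/
import Mathlib

section
/- Assume: (i) the square-root densities √f(x|θ) are continuously differentiable in each θⱼ for μ-almost every x, with f(x|θ) > 0; (ii) the per-component Fisher information I_X(θⱼ) = ∫ (∂/∂θⱼ log f(x|θ))² f(x|θ) dμ(x) exists and is a continuous function of θⱼ. Let Q(y|x) be a jointly measurable kernel density with respect to ν satisfying Q(y|x) ≤ e^ε Q(y|x') for all x, x' and ν-a.e. y (ε-differential privacy), and define f(y|θ) = ∫ Q(y|x) f(x|θ) dμ(x). Then for ν-almost every y, the map θⱼ ↦ f(y|θ) is continuously differentiable and ∂/∂θⱼ f(y|θ) = ∫ Q(y|x) (∂/∂θⱼ f(x|θ)) dμ(x). -/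
/-!
For a.e. `y`, ε-differential privacy makes `Q(y|·)` essentially bounded by `e^ε Q(y|x₀)`, so
`g ↦ ∫ Q(y|x) g(x) dμ(x)` is a bounded linear functional on `L¹(μ)`. It therefore suffices that
`t ↦ f(·|θ_t)` be differentiable in `L¹(μ)` with continuous derivative `t ↦ f'(·|θ_t)`.
Pointwise `|f'| ≤ f + f'² / (4f)`, whose integral `1 + I_X(θ_t) / 4` is continuous in `t`;
dominated convergence with dominating functions that converge in `L¹` (Scheffé) then gives the
`L¹`-continuity of `t ↦ f'(·|θ_t)`, and the fundamental theorem of calculus together with Tonelli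
turns it into `L¹`-differentiability.
-/

open MeasureTheory Filter Set TopologicalSpace Asymptotics
open scoped Topology Interval ENNReal

section Convergence

variable {ι α : Type*} [MeasurableSpace α] {μ : Measure α} {l : Filter ι} [l.IsCountablyGenerated]
  {h : ι → α → ℝ} {H : α → ℝ}

theorem tendsto_integral_abs_sub_of_tendsto_integral (hh_int : ∀ i, Integrable (h i) μ)
    (hh_nonneg : ∀ i, 0 ≤ᵐ[μ] h i) (hH_int : Integrable H μ)
    (hh_lim : ∀ᵐ x ∂μ, Tendsto (fun i => h i x) l (𝓝 (H x)))
    (hh_integral : Tendsto (fun i => ∫ x, h i x ∂μ) l (𝓝 (∫ x, H x ∂μ))) :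
    Tendsto (fun i => ∫ x, |h i x - H x| ∂μ) l (𝓝 0) := by
  have hpos_int : ∀ i, Integrable (fun x => max (H x - h i x) 0) μ := fun i =>
    ((hH_int.sub (hh_int i)).pos_part)
  have hsplit : ∀ i, ∫ x, |h i x - H x| ∂μ
      = (∫ x, h i x ∂μ - ∫ x, H x ∂μ) + 2 * ∫ x, max (H x - h i x) 0 ∂μ := fun i => by
    rw [← integral_sub (hh_int i) hH_int, ← integral_const_mul,
      ← integral_add (f := fun x => h i x - H x) ((hh_int i).sub hH_int)
        ((hpos_int i).const_mul 2)]
    congr 1 with x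
    rcases le_total (h i x) (H x) with hx | hx
    · rw [abs_of_nonpos (sub_nonpos.2 hx), max_eq_left (sub_nonneg.2 hx)]; ring
    · rw [abs_of_nonneg (sub_nonneg.2 hx), max_eq_right (sub_nonpos.2 hx)]; ring
  -- the negative part `(H - h i)⁺` is dominated by `|H|` since `h i ≥ 0`
  have hneg : Tendsto (fun i => ∫ x, max (H x - h i x) 0 ∂μ) l (𝓝 0) := by
    have := tendsto_integral_filter_of_dominated_convergence (fun x => |H x|)
      (Eventually.of_forall fun i => (hpos_int i).aestronglyMeasurable)
      (Eventually.of_forall fun i => by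
        filter_upwards [hh_nonneg i] with x hx
        rw [Real.norm_of_nonneg (le_max_right _ _)]
        exact max_le (by linarith [le_abs_self (H x), show 0 ≤ h i x from hx]) (abs_nonneg _))
      hH_int.abs (by
        filter_upwards [hh_lim] with x hx
        simpa using ((tendsto_const_nhds.sub hx).max tendsto_const_nhds))
    simpa using this
  simpa [hsplit] using (hh_integral.sub_const (∫ x, H x ∂μ)).add (hneg.const_mul 2)

theorem tendsto_integral_abs_of_abs_le_of_tendsto_integral {φ : ι → α → ℝ}
    (hφ_meas : ∀ i, AEStronglyMeasurable (φ i) μ) (hφ_le : ∀ i, ∀ᵐ x ∂μ, |φ i x| ≤ h i x)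
    (hφ_lim : ∀ᵐ x ∂μ, Tendsto (fun i => φ i x) l (𝓝 0))
    (hh_int : ∀ i, Integrable (h i) μ) (hH_int : Integrable H μ)
    (hh_lim : ∀ᵐ x ∂μ, Tendsto (fun i => h i x) l (𝓝 (H x)))
    (hh_integral : Tendsto (fun i => ∫ x, h i x ∂μ) l (𝓝 (∫ x, H x ∂μ))) :
    Tendsto (fun i => ∫ x, |φ i x| ∂μ) l (𝓝 0) := by
  have hφ_int : ∀ i, Integrable (φ i) μ := fun i =>
    (hh_int i).mono' (hφ_meas i) (by simpa only [Real.norm_eq_abs] using hφ_le i)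
  have hscheffe := tendsto_integral_abs_sub_of_tendsto_integral hh_int
    (fun i => (hφ_le i).mono fun x hx => (abs_nonneg _).trans hx) hH_int hh_lim hh_integral
  have hmin_int : ∀ i, Integrable (fun x => min |φ i x| |H x|) μ := fun i =>
    (hφ_int i).abs.inf hH_int.abs
  have hdiff_int : ∀ i, Integrable (fun x => |h i x - H x|) μ := fun i =>
    ((hh_int i).sub hH_int).abs
  have hmin : Tendsto (fun i => ∫ x, min |φ i x| |H x| ∂μ) l (𝓝 0) := by
    have := tendsto_integral_filter_of_dominated_convergence (fun x => |H x|)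
      (Eventually.of_forall fun i => (hmin_int i).aestronglyMeasurable)
      (Eventually.of_forall fun i => Eventually.of_forall fun x => by
        rw [Real.norm_of_nonneg (le_min (abs_nonneg _) (abs_nonneg _))]
        exact min_le_right _ _)
      hH_int.abs (by
        filter_upwards [hφ_lim] with x hx
        simpa using hx.abs.min (tendsto_const_nhds (x := |H x|)))
    simpa using this
  -- `|φ| ≤ min |φ| |H| + |h - H|`: where `|φ| > |H|`, already `|φ| ≤ h ≤ |H| + |h - H|`
  refine squeeze_zero (fun i => integral_nonneg fun x => abs_nonneg _) (fun i => ?_)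
    (by simpa using hmin.add hscheffe)
  rw [← integral_add (hmin_int i) (hdiff_int i)]
  refine integral_mono_ae (hφ_int i).abs ((hmin_int i).add (hdiff_int i)) ?_
  filter_upwards [hφ_le i] with x hx
  rcases le_total |φ i x| |H x| with hc | hc
  · simp [min_eq_left hc]
  · rw [min_eq_right hc]
    linarith [abs_sub_abs_le_abs_sub (h i x) (H x), le_abs_self (h i x)]

end Convergence

theorem abs_le_add_sq_div {a : ℝ} (ha : 0 < a) (b : ℝ) : |b| ≤ a + b ^ 2 / a / 4 := by
  have key : a + b ^ 2 / a / 4 - |b| = (2 * a - |b|) ^ 2 / (4 * a) := by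
    field_simp
    rw [← sq_abs b]
    ring
  have : 0 ≤ (2 * a - |b|) ^ 2 / (4 * a) := by positivity
  linarith

section Fisher

variable {α : Type*} [MeasurableSpace α] {μ : Measure α}

theorem integrable_of_integrable_sq_div {f g : α → ℝ} (hf_pos : ∀ x, 0 < f x)
    (hf : Integrable f μ) (hg : AEStronglyMeasurable g μ)
    (hI : Integrable (fun x => g x ^ 2 / f x) μ) : Integrable g μ :=
  (hf.add (hI.div_const 4)).mono' hg
    (Eventually.of_forall fun x => abs_le_add_sq_div (hf_pos x) (g x))

theorem tendsto_integral_abs_sub_of_continuous_fisher {F F' : ℝ → α → ℝ}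
    (hF_pos : ∀ t x, 0 < F t x) (hF'_meas : ∀ t, AEStronglyMeasurable (F' t) μ)
    (hF_cont : ∀ᵐ x ∂μ, Continuous (F · x)) (hF'_cont : ∀ᵐ x ∂μ, Continuous (F' · x))
    (hF_int : ∀ t, Integrable (F t) μ) (hF_integral : Continuous fun t => ∫ x, F t x ∂μ)
    (hI_int : ∀ t, Integrable (fun x => F' t x ^ 2 / F t x) μ)
    (hI_cont : Continuous fun t => ∫ x, F' t x ^ 2 / F t x ∂μ) (t₀ : ℝ) :
    Tendsto (fun t => ∫ x, |F' t x - F' t₀ x| ∂μ) (𝓝 t₀) (𝓝 0) := by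
  -- `B t` dominates `|F' t|`, converges pointwise, and has a continuous integral
  set B : ℝ → α → ℝ := fun t x => F t x + F' t x ^ 2 / F t x / 4
  have hB_int : ∀ t, Integrable (B t) μ := fun t => (hF_int t).add ((hI_int t).div_const 4)
  have hB_integral : Continuous fun t => ∫ x, B t x ∂μ := by
    have : (fun t => ∫ x, B t x ∂μ) = fun t => ∫ x, F t x ∂μ + (∫ x, F' t x ^ 2 / F t x ∂μ) / 4 :=
      funext fun t => by rw [integral_add (hF_int t) ((hI_int t).div_const 4), integral_div]
    rw [this]
    exact hF_integral.add (hI_cont.div_const 4)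
  refine tendsto_integral_abs_of_abs_le_of_tendsto_integral (h := fun t x => B t x + B t₀ x)
    (H := fun x => B t₀ x + B t₀ x) (fun t => (hF'_meas t).sub (hF'_meas t₀))
    (fun t => Eventually.of_forall fun x => (abs_sub _ _).trans (add_le_add
      (abs_le_add_sq_div (hF_pos t x) _) (abs_le_add_sq_div (hF_pos t₀ x) _))) ?_
    (fun t => (hB_int t).add (hB_int t₀)) ((hB_int t₀).add (hB_int t₀)) ?_ ?_
  · filter_upwards [hF'_cont] with x hx
    simpa using (hx.tendsto t₀).sub_const (F' t₀ x)
  · filter_upwards [hF_cont, hF'_cont] with x hx hx'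
    have hBx : Continuous (B · x) :=
      hx.add (((hx'.pow 2).div hx fun t => (hF_pos t x).ne').div_const 4)
    exact (hBx.tendsto t₀).add_const _
  · simp only [integral_add (hB_int _) (hB_int t₀)]
    exact (hB_integral.tendsto t₀).add_const _

end Fisher

theorem hasDerivAt_of_hasDerivAt_sqrt {φ : ℝ → ℝ} {φ' t : ℝ} (hφ : ∀ r, 0 ≤ φ r) (ht : 0 < φ t)
    (h : HasDerivAt (fun r => √(φ r)) (φ' / (2 * √(φ t))) t) : HasDerivAt φ φ' t := by
  have hsq : HasDerivAt (fun r => √(φ r) ^ 2) (2 * √(φ t) * (φ' / (2 * √(φ t)))) t := by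
    simpa using h.fun_pow 2
  have hsqrt : √(φ t) ≠ 0 := (Real.sqrt_pos.2 ht).ne'
  simp only [Real.sq_sqrt (hφ _)] at hsq
  convert hsq using 1
  field_simp

theorem continuous_of_continuous_div_two_sqrt {φ φ' : ℝ → ℝ} (hφ : Continuous φ)
    (hpos : ∀ t, 0 < φ t) (h : Continuous fun t => φ' t / (2 * √(φ t))) : Continuous φ' := by
  have heq : φ' = fun t => 2 * √(φ t) * (φ' t / (2 * √(φ t))) := funext fun t => by
    have : √(φ t) ≠ 0 := (Real.sqrt_pos.2 (hpos t)).ne'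
    field_simp
  rw [heq]
  exact (continuous_const.mul hφ.sqrt).mul h

theorem aemeasurable_uncurry_of_ae_continuous {ι α : Type*} [TopologicalSpace ι]
    [MetrizableSpace ι] [MeasurableSpace ι] [SecondCountableTopology ι] [OpensMeasurableSpace ι]
    [MeasurableSpace α] {ν : Measure ι} {μ : Measure α} [SFinite ν] [SFinite μ] {u : ι → α → ℝ}
    (hu_meas : ∀ i, Measurable (u i)) (hu_cont : ∀ᵐ x ∂μ, Continuous fun i => u i x) :
    AEMeasurable (Function.uncurry u) (ν.prod μ) := by
  set s := toMeasurable μ {x | ¬ Continuous fun i => u i x}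
  have hs : MeasurableSet s := measurableSet_toMeasurable _ _
  have hs_null : ∀ᵐ x ∂μ, x ∈ sᶜ := by
    rw [ae_iff]
    simpa [s, measure_toMeasurable] using ae_iff.1 hu_cont
  -- redefining `u` as `0` on the null set `s` makes it continuous in `i` everywhere
  refine ⟨Function.uncurry fun i => sᶜ.indicator (u i),
    measurable_uncurry_of_continuous_of_measurable (fun x => ?_)
      (fun i => (hu_meas i).indicator hs.compl), ?_⟩
  · by_cases hx : x ∈ s
    · simpa [hx] using continuous_const
    · simp only [indicator_of_mem (show x ∈ sᶜ from hx)]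
      by_contra hc
      exact hx (subset_toMeasurable _ _ hc)
  · filter_upwards [Measure.quasiMeasurePreserving_snd.ae hs_null] with p hp
    simp [Function.uncurry, indicator_of_mem hp]

theorem enorm_sub_sub_mul_le_lintegral {φ φ' : ℝ → ℝ} (hφ : ∀ u, HasDerivAt φ (φ' u) u)
    (hφ' : Continuous φ') (t₀ t : ℝ) :
    ‖φ t - φ t₀ - (t - t₀) * φ' t₀‖ₑ ≤ ∫⁻ u in Ι t₀ t, ‖φ' u - φ' t₀‖ₑ := by
  have hftc : φ t - φ t₀ - (t - t₀) * φ' t₀ = ∫ u in t₀..t, (φ' u - φ' t₀) := by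
    rw [intervalIntegral.integral_sub (hφ'.intervalIntegrable t₀ t) intervalIntegrable_const,
      intervalIntegral.integral_eq_sub_of_hasDerivAt (fun u _ => hφ u)
        (hφ'.intervalIntegrable t₀ t), intervalIntegral.integral_const, smul_eq_mul]
  rw [hftc, ← enorm_norm, intervalIntegral.norm_integral_eq_norm_integral_uIoc, enorm_norm]
  exact enorm_integral_le_lintegral_enorm _

section L1Calculus

variable {α : Type*} [MeasurableSpace α] {μ : Measure α} {F F' : ℝ → α → ℝ}

theorem integral_abs_sub_sub_mul_le [SFinite μ] (hF_meas : ∀ t, AEStronglyMeasurable (F t) μ)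
    (hF'_meas : ∀ t, Measurable (F' t)) (hF'_int : ∀ t, Integrable (F' t) μ)
    (hF_deriv : ∀ᵐ x ∂μ, ∀ t, HasDerivAt (F · x) (F' t x) t)
    (hF'_cont : ∀ᵐ x ∂μ, Continuous (F' · x)) {t₀ t δ : ℝ}
    (hδ : ∀ u ∈ Ι t₀ t, ∫ x, |F' u x - F' t₀ x| ∂μ ≤ δ) :
    ∫ x, |F t x - F t₀ x - (t - t₀) * F' t₀ x| ∂μ ≤ δ * |t - t₀| := by
  rcases eq_or_ne t t₀ with rfl | hne
  · simp
  have hδ0 : 0 ≤ δ := by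
    obtain ⟨u, hu⟩ := nonempty_uIoc.2 hne.symm
    exact (integral_nonneg fun _ => abs_nonneg _).trans (hδ u hu)
  have hjoint : AEMeasurable (Function.uncurry fun u x => ‖F' u x - F' t₀ x‖ₑ)
      ((volume.restrict (Ι t₀ t)).prod μ) :=
    ((aemeasurable_uncurry_of_ae_continuous (u := fun u x => F' u x - F' t₀ x)
      (fun u => (hF'_meas u).sub (hF'_meas t₀))
      (hF'_cont.mono fun x hx => hx.sub continuous_const))).enorm
  have hlint : ∫⁻ x, ‖F t x - F t₀ x - (t - t₀) * F' t₀ x‖ₑ ∂μ ≤ ENNReal.ofReal (δ * |t - t₀|) :=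
    calc ∫⁻ x, ‖F t x - F t₀ x - (t - t₀) * F' t₀ x‖ₑ ∂μ
        ≤ ∫⁻ x, (∫⁻ u in Ι t₀ t, ‖F' u x - F' t₀ x‖ₑ) ∂μ := by
          refine lintegral_mono_ae ?_
          filter_upwards [hF_deriv, hF'_cont] with x hx hx'
          exact enorm_sub_sub_mul_le_lintegral hx hx' t₀ t
      _ = ∫⁻ u in Ι t₀ t, (∫⁻ x, ‖F' u x - F' t₀ x‖ₑ ∂μ) := (lintegral_lintegral_swap hjoint).symm
      _ ≤ ∫⁻ _ in Ι t₀ t, ENNReal.ofReal δ := by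
          refine setLIntegral_mono' measurableSet_uIoc fun u hu => ?_
          rw [← ofReal_integral_norm_eq_lintegral_enorm (f := fun x => F' u x - F' t₀ x)
            ((hF'_int u).sub (hF'_int t₀))]
          exact ENNReal.ofReal_le_ofReal (hδ u hu)
      _ = ENNReal.ofReal (δ * |t - t₀|) := by
          rw [setLIntegral_const, Real.volume_uIoc, ← ENNReal.ofReal_mul hδ0]
  have hmeas : AEStronglyMeasurable (fun x => F t x - F t₀ x - (t - t₀) * F' t₀ x) μ :=
    ((hF_meas t).sub (hF_meas t₀)).sub ((hF'_meas t₀).aestronglyMeasurable.const_mul _)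
  simp only [← Real.norm_eq_abs]
  rw [integral_norm_eq_lintegral_enorm hmeas]
  exact ENNReal.toReal_le_of_le_ofReal (by positivity) hlint

theorem isLittleO_integral_abs_sub_sub_mul [SFinite μ]
    (hF_meas : ∀ t, AEStronglyMeasurable (F t) μ)
    (hF'_meas : ∀ t, Measurable (F' t)) (hF'_int : ∀ t, Integrable (F' t) μ)
    (hF_deriv : ∀ᵐ x ∂μ, ∀ t, HasDerivAt (F · x) (F' t x) t)
    (hF'_cont : ∀ᵐ x ∂μ, Continuous (F' · x)) {t₀ : ℝ}
    (hF'_L1 : Tendsto (fun t => ∫ x, |F' t x - F' t₀ x| ∂μ) (𝓝 t₀) (𝓝 0)) :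
    (fun t => ∫ x, |F t x - F t₀ x - (t - t₀) * F' t₀ x| ∂μ) =o[𝓝 t₀] fun t => t - t₀ := by
  refine isLittleO_iff.2 fun c hc => ?_
  obtain ⟨r, hr, hball⟩ := Metric.eventually_nhds_iff.1 (hF'_L1.eventually_le_const hc)
  filter_upwards [Metric.ball_mem_nhds t₀ hr] with t ht
  rw [Real.norm_of_nonneg (integral_nonneg fun _ => abs_nonneg _), Real.norm_eq_abs]
  refine integral_abs_sub_sub_mul_le hF_meas hF'_meas hF'_int hF_deriv hF'_cont fun u hu => ?_
  refine hball ((abs_sub_left_of_mem_uIcc (uIoc_subset_uIcc hu)).trans_lt ?_)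
  simpa [Real.dist_eq] using ht

end L1Calculus

section BoundedMultiplier

variable {α : Type*} [MeasurableSpace α] {μ : Measure α} {q : α → ℝ} {C : ℝ}

theorem abs_integral_mul_le (hq : ∀ᵐ x ∂μ, |q x| ≤ C) {g : α → ℝ} (hg : Integrable g μ) :
    |∫ x, q x * g x ∂μ| ≤ C * ∫ x, |g x| ∂μ := by
  rw [← integral_const_mul]
  refine (abs_integral_le_integral_abs).trans (integral_mono_of_nonneg
    (Eventually.of_forall fun x => abs_nonneg _) (hg.abs.const_mul C) ?_)
  filter_upwards [hq] with x hx
  rw [abs_mul]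
  exact mul_le_mul_of_nonneg_right hx (abs_nonneg _)

variable {F F' : ℝ → α → ℝ}

theorem continuous_integral_mul (hq : ∀ᵐ x ∂μ, |q x| ≤ C) (hq_meas : AEStronglyMeasurable q μ)
    (hF'_int : ∀ t, Integrable (F' t) μ)
    (hF'_L1 : ∀ t₀, Tendsto (fun t => ∫ x, |F' t x - F' t₀ x| ∂μ) (𝓝 t₀) (𝓝 0)) :
    Continuous fun t => ∫ x, q x * F' t x ∂μ := by
  have hqF' : ∀ t, Integrable (fun x => q x * F' t x) μ := fun t =>
    (hF'_int t).bdd_mul hq_meas (by simpa only [Real.norm_eq_abs] using hq)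
  refine continuous_iff_continuousAt.2 fun t₀ => tendsto_iff_dist_tendsto_zero.2 ?_
  refine squeeze_zero (fun _ => dist_nonneg) (fun t => ?_) (by simpa using (hF'_L1 t₀).const_mul C)
  rw [Real.dist_eq, ← integral_sub (hqF' t) (hqF' t₀)]
  simpa only [mul_sub] using
    abs_integral_mul_le hq (g := fun x => F' t x - F' t₀ x) ((hF'_int t).sub (hF'_int t₀))

theorem hasDerivAt_integral_mul [SFinite μ] (hq : ∀ᵐ x ∂μ, |q x| ≤ C)
    (hq_meas : AEStronglyMeasurable q μ) (hF_int : ∀ t, Integrable (F t) μ)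
    (hF'_meas : ∀ t, Measurable (F' t)) (hF'_int : ∀ t, Integrable (F' t) μ)
    (hF_deriv : ∀ᵐ x ∂μ, ∀ t, HasDerivAt (F · x) (F' t x) t)
    (hF'_cont : ∀ᵐ x ∂μ, Continuous (F' · x)) {t₀ : ℝ}
    (hF'_L1 : Tendsto (fun t => ∫ x, |F' t x - F' t₀ x| ∂μ) (𝓝 t₀) (𝓝 0)) :
    HasDerivAt (fun t => ∫ x, q x * F t x ∂μ) (∫ x, q x * F' t₀ x ∂μ) t₀ := by
  have hqint : ∀ {g : α → ℝ}, Integrable g μ → Integrable (fun x => q x * g x) μ := fun hg =>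
    hg.bdd_mul hq_meas (by simpa only [Real.norm_eq_abs] using hq)
  have hremainder : ∀ t, ∫ x, q x * F t x ∂μ - ∫ x, q x * F t₀ x ∂μ
      - (t - t₀) • ∫ x, q x * F' t₀ x ∂μ
      = ∫ x, q x * (F t x - F t₀ x - (t - t₀) * F' t₀ x) ∂μ := fun t => by
    rw [smul_eq_mul, ← integral_const_mul, ← integral_sub (hqint (hF_int t)) (hqint (hF_int t₀)),
      ← integral_sub (f := fun x => q x * F t x - q x * F t₀ x)
        ((hqint (hF_int t)).sub (hqint (hF_int t₀)))
        ((hqint (hF'_int t₀)).const_mul _)]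
    congr 1 with x
    ring
  refine hasDerivAt_iff_isLittleO.2 (IsBigO.trans_isLittleO ?_ (isLittleO_integral_abs_sub_sub_mul
    (fun t => (hF_int t).aestronglyMeasurable) hF'_meas hF'_int hF_deriv hF'_cont hF'_L1))
  refine IsBigO.of_bound C (Eventually.of_forall fun t => ?_)
  rw [hremainder, Real.norm_eq_abs, Real.norm_of_nonneg (integral_nonneg fun _ => abs_nonneg _)]
  exact abs_integral_mul_le hq (g := fun x => F t x - F t₀ x - (t - t₀) * F' t₀ x)
    (((hF_int t).sub (hF_int t₀)).sub ((hF'_int t₀).const_mul _))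

end BoundedMultiplier

theorem ae_ae_le_mul_of_forall_ae_le {X Y : Type*} [MeasurableSpace X] [MeasurableSpace Y]
    {μ : Measure X} {ν : Measure Y} [SFinite μ] [SFinite ν] {Q : Y → X → ℝ}
    (hQ : Measurable (Function.uncurry Q)) {c : ℝ} (hQc : ∀ x x', ∀ᵐ y ∂ν, Q y x ≤ c * Q y x')
    (x₀ : X) : ∀ᵐ y ∂ν, ∀ᵐ x ∂μ, Q y x ≤ c * Q y x₀ :=
  (Measure.ae_ae_comm (p := fun x y => Q y x ≤ c * Q y x₀)
    (measurableSet_le (hQ.comp measurable_swap)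
      (measurable_const.mul (hQ.comp (measurable_snd.prodMk measurable_const))))).1
    (ae_of_all _ fun x => hQc x x₀)

theorem dp_marginal_density_differentiable_general {X Y : Type*}
    [MeasurableSpace X] [MeasurableSpace Y]
    (d : ℕ) (μ : Measure X) (ν : Measure Y) [SigmaFinite μ] [SigmaFinite ν] (ε : ℝ)
    (f : (Fin d → ℝ) → X → ℝ)
    (hfpos : ∀ θ x, 0 < f θ x)
    (hfdens : ∀ θ, ∫ x, f θ x ∂μ = 1)
    (f' : (Fin d → ℝ) → X → Fin d → ℝ)
    (hf'meas : ∀ θ j, Measurable fun x => f' θ x j)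
    (hsqrtC1 : ∀ (θ : Fin d → ℝ) (j : Fin d), ∀ᵐ x ∂μ,
      (∀ t : ℝ, HasDerivAt (fun r => Real.sqrt (f (Function.update θ j r) x))
        (f' (Function.update θ j t) x j / (2 * Real.sqrt (f (Function.update θ j t) x))) t)
      ∧ Continuous fun t : ℝ =>
          f' (Function.update θ j t) x j / (2 * Real.sqrt (f (Function.update θ j t) x)))
    (hFisher_int : ∀ (θ : Fin d → ℝ) (j : Fin d),
      Integrable (fun x => (f' θ x j) ^ 2 / f θ x) μ)
    (hFisher_cont : ∀ (θ : Fin d → ℝ) (j : Fin d), Continuous fun t : ℝ =>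
      ∫ x, (f' (Function.update θ j t) x j) ^ 2 / f (Function.update θ j t) x ∂μ)
    (Q : Y → X → ℝ) (hQmeas : Measurable (Function.uncurry Q))
    (hQpos : ∀ y x, 0 ≤ Q y x)
    (hDP : ∀ x x', ∀ᵐ y ∂ν, Q y x ≤ Real.exp ε * Q y x') :
    ∀ (θ : Fin d → ℝ) (j : Fin d), ∀ᵐ y ∂ν,
      (∀ t : ℝ, HasDerivAt (fun r => ∫ x, Q y x * f (Function.update θ j r) x ∂μ)
        (∫ x, Q y x * f' (Function.update θ j t) x j ∂μ) t)
      ∧ Continuous fun t : ℝ => ∫ x, Q y x * f' (Function.update θ j t) x j ∂μ := by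
  intro θ j
  set F : ℝ → X → ℝ := fun t => f (Function.update θ j t)
  set F' : ℝ → X → ℝ := fun t x => f' (Function.update θ j t) x j
  have hF_int : ∀ t, Integrable (F t) μ := fun t =>
    .of_integral_ne_zero (by simp [F, hfdens])
  have hF'_int : ∀ t, Integrable (F' t) μ := fun t => integrable_of_integrable_sq_div (hfpos _)
    (hF_int t) (hf'meas _ j).aestronglyMeasurable (hFisher_int _ j)
  have hF_deriv : ∀ᵐ x ∂μ, ∀ t, HasDerivAt (F · x) (F' t x) t := (hsqrtC1 θ j).mono
    fun x hx t => hasDerivAt_of_hasDerivAt_sqrt (fun _ => (hfpos _ x).le) (hfpos _ x) (hx.1 t)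
  have hF_cont : ∀ᵐ x ∂μ, Continuous (F · x) := hF_deriv.mono fun x hx =>
    continuous_iff_continuousAt.2 fun t => (hx t).continuousAt
  have hF'_cont : ∀ᵐ x ∂μ, Continuous (F' · x) := by
    filter_upwards [hsqrtC1 θ j, hF_cont] with x hx hFx
    exact continuous_of_continuous_div_two_sqrt hFx (fun _ => hfpos _ x) hx.2
  have hF'_L1 := tendsto_integral_abs_sub_of_continuous_fisher (fun _ x => hfpos _ x)
    (fun _ => (hf'meas _ j).aestronglyMeasurable) hF_cont hF'_cont hF_int
    (by simpa [F, hfdens] using continuous_const) (fun _ => hFisher_int _ j) (hFisher_cont θ j)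
  obtain ⟨x₀⟩ : Nonempty X := by
    by_contra hX
    have : IsEmpty X := not_nonempty_iff.1 hX
    simpa [integral_of_isEmpty] using hfdens θ
  filter_upwards [ae_ae_le_mul_of_forall_ae_le (μ := μ) hQmeas hDP x₀] with y hy
  have hq : ∀ᵐ x ∂μ, |Q y x| ≤ Real.exp ε * Q y x₀ :=
    hy.mono fun x hx => by rwa [abs_of_nonneg (hQpos y x)]
  have hq_meas : AEStronglyMeasurable (Q y) μ :=
    (hQmeas.comp measurable_prodMk_left).aestronglyMeasurable
  exact ⟨fun t => hasDerivAt_integral_mul hq hq_meas hF_int (fun _ => hf'meas _ j) hF'_int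
    hF_deriv hF'_cont (hF'_L1 t), continuous_integral_mul hq hq_meas hF'_int hF'_L1⟩

/-- (Regularity lemma) Assume (i) the square-root densities
`√f(x|θ)` are continuously differentiable in each coordinate `θⱼ` for μ-a.e. `x`, with
`f(x|θ) > 0` (here `f'` denotes the partial derivatives of `f`, so that
`∂_{θⱼ} √f = f'ⱼ / (2√f)`); (ii) the per-component Fisher information
`I_X(θⱼ) = ∫ (∂_{θⱼ} log f(x|θ))² f(x|θ) dμ(x) = ∫ (f'ⱼ)²/f dμ` exists and is continuous
in `θⱼ`. If `Q(y|x)` is an ε-differentially private kernel density and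
`f(y|θ) = ∫ Q(y|x) f(x|θ) dμ(x)`, then for ν-a.e. `y` the map `θⱼ ↦ f(y|θ)` is
continuously differentiable with `∂_{θⱼ} f(y|θ) = ∫ Q(y|x) ∂_{θⱼ} f(x|θ) dμ(x)`. -/
theorem dp_marginal_density_differentiable {X Y : Type*}
    [MeasurableSpace X] [MeasurableSpace Y]
    (d : ℕ) (μ : Measure X) (ν : Measure Y) [SigmaFinite μ] [SigmaFinite ν] (ε : ℝ)
    (hε : 0 < ε)
    (f : (Fin d → ℝ) → X → ℝ)
    (hfpos : ∀ θ x, 0 < f θ x)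
    (hfmeas : ∀ θ, Measurable (f θ))
    (hfdens : ∀ θ, ∫ x, f θ x ∂μ = 1)
    (f' : (Fin d → ℝ) → X → Fin d → ℝ)
    (hf'meas : ∀ θ j, Measurable fun x => f' θ x j)
    (hsqrtC1 : ∀ (θ : Fin d → ℝ) (j : Fin d), ∀ᵐ x ∂μ,
      (∀ t : ℝ, HasDerivAt (fun r => Real.sqrt (f (Function.update θ j r) x))
        (f' (Function.update θ j t) x j / (2 * Real.sqrt (f (Function.update θ j t) x))) t)
      ∧ Continuous fun t : ℝ =>
          f' (Function.update θ j t) x j / (2 * Real.sqrt (f (Function.update θ j t) x)))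
    (hFisher_int : ∀ (θ : Fin d → ℝ) (j : Fin d),
      Integrable (fun x => (f' θ x j) ^ 2 / f θ x) μ)
    (hFisher_cont : ∀ (θ : Fin d → ℝ) (j : Fin d), Continuous fun t : ℝ =>
      ∫ x, (f' (Function.update θ j t) x j) ^ 2 / f (Function.update θ j t) x ∂μ)
    (Q : Y → X → ℝ) (hQmeas : Measurable (Function.uncurry Q))
    (hQpos : ∀ y x, 0 ≤ Q y x) (hQdens : ∀ x, ∫ y, Q y x ∂ν = 1)
    (hDP : ∀ x x', ∀ᵐ y ∂ν, Q y x ≤ Real.exp ε * Q y x') :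
    ∀ (θ : Fin d → ℝ) (j : Fin d), ∀ᵐ y ∂ν,
      (∀ t : ℝ, HasDerivAt (fun r => ∫ x, Q y x * f (Function.update θ j r) x ∂μ)
        (∫ x, Q y x * f' (Function.update θ j t) x j ∂μ) t)
      ∧ Continuous fun t : ℝ => ∫ x, Q y x * f' (Function.update θ j t) x j ∂μ :=
  dp_marginal_density_differentiable_general d μ ν ε f hfpos hfdens f' hf'meas hsqrtC1 hFisher_int
    hFisher_cont Q hQmeas hQpos hDP
end

section
/- Let X ~ Bern(p) with 0 < p < 1, and let S(X) be the Bernoulli score: S(1) = 1/p and S(0) = −1/(1−p). Set σ = max{ 1/(p √(log(1/p))), 1/((1−p) √(log(1/(1−p)))) }. Then E[exp((S(X)/σ)²)] = p·exp(1/(pσ)²) + (1−p)·exp(1/((1−p)σ)²) ≤ 2, i.e. S(X) is sub-Gaussian with parameter σ. Moreover, if p = θ with s/(2d) ≤ θ ≤ s/d ≤ 1/2, then σ² = 1/(θ² log(1/θ)) ≤ c₀ d² / (s² log(d/s)) for an absolute constant c₀. -/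
/-!
Each of the two terms `q * exp ((1 / (q * σ)) ^ 2)` is at most `1` as soon as
`σ ≥ 1 / (q * √(log (1 / q)))`, because then the exponent is at most `log (1 / q)`.
For `θ ≤ 1/2` the maximum defining `σ` is attained at `θ`: this is the inequality
`θ² log (1/θ) ≤ (1-θ)² log (1/(1-θ))`, which follows from the monotonicity of
`x log x / (x - 1)` on `(0, 1)`: its derivative `(x - 1 - log x) / (x - 1)²` is nonnegative
since `log x ≤ x - 1`.
The bound on `σ²` then holds with `c₀ = 4`, from `θ ≥ s/(2d)` and `log (1/θ) ≥ log (d/s)`.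
-/

open Real Set

lemma mul_exp_sq_le_one {q σ : ℝ} (hq0 : 0 < q) (hq1 : q < 1)
    (hσ : 1 / (q * √(log (1 / q))) ≤ σ) :
    q * exp ((1 / (q * σ)) ^ 2) ≤ 1 := by
  have hlog : 0 < log (1 / q) := log_pos (one_lt_one_div hq0 hq1)
  have hσ0 : 0 < σ := lt_of_lt_of_le (by positivity) hσ
  have hsq : (1 / (q * σ)) ^ 2 ≤ log (1 / q) := by
    rw [div_le_iff₀ (by positivity)] at hσ
    calc (1 / (q * σ)) ^ 2 ≤ √(log (1 / q)) ^ 2 := by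
          gcongr
          rw [div_le_iff₀ (by positivity)]
          linarith
      _ = log (1 / q) := sq_sqrt hlog.le
  calc q * exp ((1 / (q * σ)) ^ 2) ≤ q * (1 / q) := by
        gcongr
        exact (exp_le_exp.2 hsq).trans_eq (exp_log (by positivity))
    _ = 1 := by field_simp

lemma hasDerivAt_mul_log_div_sub_one {x : ℝ} (hx0 : 0 < x) (hx1 : x ≠ 1) :
    HasDerivAt (fun x => x * log x / (x - 1)) ((x - 1 - log x) / (x - 1) ^ 2) x := by
  have hx1' : x - 1 ≠ 0 := sub_ne_zero.2 hx1
  refine (((hasDerivAt_id' x).mul (hasDerivAt_log hx0.ne')).div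
    ((hasDerivAt_id' x).sub_const 1) hx1').congr_deriv ?_
  field_simp
  simp only [Pi.mul_apply]
  ring

lemma monotoneOn_mul_log_div_sub_one :
    MonotoneOn (fun x => x * log x / (x - 1)) (Ioo 0 1) := by
  have hderiv : ∀ x ∈ Ioo (0 : ℝ) 1, HasDerivAt (fun x => x * log x / (x - 1))
      ((x - 1 - log x) / (x - 1) ^ 2) x :=
    fun x hx => hasDerivAt_mul_log_div_sub_one hx.1 hx.2.ne
  refine monotoneOn_of_deriv_nonneg (convex_Ioo 0 1)
    (fun x hx => (hderiv x hx).continuousAt.continuousWithinAt) ?_ ?_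
  all_goals rw [interior_Ioo]
  · exact fun x hx => (hderiv x hx).differentiableAt.differentiableWithinAt
  · intro x hx
    rw [(hderiv x hx).deriv]
    exact div_nonneg (by linarith [log_le_sub_one_of_pos hx.1]) (sq_nonneg _)

lemma sq_mul_log_inv_le_of_le_half {θ : ℝ} (hθ0 : 0 < θ) (hθ : θ ≤ 1 / 2) :
    θ ^ 2 * log (1 / θ) ≤ (1 - θ) ^ 2 * log (1 / (1 - θ)) := by
  have h1θ : 0 < 1 - θ := by linarith
  have h := monotoneOn_mul_log_div_sub_one ⟨hθ0, by linarith⟩ ⟨h1θ, by linarith⟩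
    (show θ ≤ 1 - θ by linarith)
  dsimp only at h
  rw [show θ - 1 = -(1 - θ) by ring, show 1 - θ - 1 = -θ by ring, div_neg, div_neg,
    neg_le_neg_iff, div_le_div_iff₀ hθ0 h1θ] at h
  simp only [one_div, log_inv]
  linarith

lemma one_div_mul_sqrt_log_inv_le_of_le_half {θ : ℝ} (hθ0 : 0 < θ) (hθ : θ ≤ 1 / 2) :
    1 / ((1 - θ) * √(log (1 / (1 - θ)))) ≤ 1 / (θ * √(log (1 / θ))) := by
  have h1θ : 0 < 1 - θ := by linarith
  have hlog : 0 < log (1 / θ) := log_pos (one_lt_one_div hθ0 (by linarith))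
  refine one_div_le_one_div_of_le (by positivity) ?_
  have hsqrt : ∀ x : ℝ, 0 < x → x * √(log (1 / x)) = √(x ^ 2 * log (1 / x)) := by
    intro x hx
    rw [sqrt_mul (sq_nonneg x), sqrt_sq hx.le]
  rw [hsqrt θ hθ0, hsqrt (1 - θ) h1θ]
  exact sqrt_le_sqrt (sq_mul_log_inv_le_of_le_half hθ0 hθ)

lemma one_div_sq_mul_log_inv_le {s d θ : ℝ} (hs : 0 < s) (hd : 0 < d)
    (hθs : s / (2 * d) ≤ θ) (hθd : θ ≤ s / d) (hsd : s / d ≤ 1 / 2) :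
    1 / (θ ^ 2 * log (1 / θ)) ≤ 4 * d ^ 2 / (s ^ 2 * log (d / s)) := by
  have hθ0 : 0 < θ := lt_of_lt_of_le (by positivity) hθs
  have hds : 1 < d / s := by
    rw [div_le_div_iff₀ hd two_pos] at hsd
    rw [one_lt_div hs]
    linarith
  have hlog_pos : 0 < log (d / s) := log_pos hds
  have hlog_le : log (d / s) ≤ log (1 / θ) := by
    refine log_le_log (by positivity) ?_
    simpa only [one_div_div] using one_div_le_one_div_of_le hθ0 hθd
  have hsq_le : s ^ 2 / (4 * d ^ 2) ≤ θ ^ 2 := by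
    calc s ^ 2 / (4 * d ^ 2) = (s / (2 * d)) ^ 2 := by ring
      _ ≤ θ ^ 2 := by gcongr
  calc 1 / (θ ^ 2 * log (1 / θ)) ≤ 1 / (s ^ 2 / (4 * d ^ 2) * log (d / s)) :=
        one_div_le_one_div_of_le (by positivity)
          (mul_le_mul hsq_le hlog_le hlog_pos.le (sq_nonneg _))
    _ = 4 * d ^ 2 / (s ^ 2 * log (d / s)) := by
        rw [div_mul_eq_mul_div, one_div_div]

/-- (Bernoulli score is sub-Gaussian) For `X ~ Bern(p)`, `0 < p < 1`,
with score `S(1) = 1/p`, `S(0) = −1/(1−p)` and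
`σ = max{1/(p√(log(1/p))), 1/((1−p)√(log(1/(1−p))))}`, one has
`E[exp((S(X)/σ)²)] = p·exp(1/(pσ)²) + (1−p)·exp(1/((1−p)σ)²) ≤ 2`, i.e. the score is
sub-Gaussian with parameter `σ`. Moreover there is an absolute constant `c₀` such that if
`p = θ` with `s/(2d) ≤ θ ≤ s/d ≤ 1/2`, then
`σ² = 1/(θ² log(1/θ)) ≤ c₀ d²/(s² log(d/s))`. -/
theorem bernoulli_score_subGaussian :
    (∀ p : ℝ, 0 < p → p < 1 →
      p * Real.exp ((1 / (p * max (1 / (p * Real.sqrt (Real.log (1 / p))))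
            (1 / ((1 - p) * Real.sqrt (Real.log (1 / (1 - p))))))) ^ 2)
        + (1 - p) * Real.exp ((1 / ((1 - p) * max (1 / (p * Real.sqrt (Real.log (1 / p))))
            (1 / ((1 - p) * Real.sqrt (Real.log (1 / (1 - p))))))) ^ 2) ≤ 2)
    ∧ ∃ c₀ : ℝ, 0 < c₀ ∧ ∀ s d θ : ℝ, 0 < s → 0 < d →
        s / (2 * d) ≤ θ → θ ≤ s / d → s / d ≤ 1 / 2 →
        (max (1 / (θ * Real.sqrt (Real.log (1 / θ))))
            (1 / ((1 - θ) * Real.sqrt (Real.log (1 / (1 - θ)))))) ^ 2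
          = 1 / (θ ^ 2 * Real.log (1 / θ))
        ∧ 1 / (θ ^ 2 * Real.log (1 / θ)) ≤ c₀ * d ^ 2 / (s ^ 2 * Real.log (d / s)) := by
  constructor
  · intro p hp0 hp1
    refine (add_le_add (mul_exp_sq_le_one hp0 hp1 (le_max_left _ _))
      (mul_exp_sq_le_one (by linarith) (by linarith) (le_max_right _ _))).trans_eq ?_
    norm_num
  · refine ⟨4, by norm_num, fun s d θ hs hd hθs hθd hsd =>
      ⟨?_, one_div_sq_mul_log_inv_le hs hd hθs hθd hsd⟩⟩
    have hθ0 : 0 < θ := lt_of_lt_of_le (by positivity) hθs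
    have hθ : θ ≤ 1 / 2 := hθd.trans hsd
    have hlog : 0 < log (1 / θ) := log_pos (one_lt_one_div hθ0 (by linarith))
    rw [max_eq_left (one_div_mul_sqrt_log_inv_le_of_le_half hθ0 hθ), div_pow, one_pow, mul_pow,
      sq_sqrt hlog.le]
end
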